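/- Choice coupling for discrete Laplacians (Laplace-choice): for any ε > 0, integers m, m' with |m − m'| ≤ 1, and any integer threshold T, there exists a (2ε, 0)-approximate coupling between Lap_ε^m and Lap_ε^{m'} for the relation Φ = {(z, z') : (T ≤ z ∧ T+1 ≤ z') ∨ (z < T ∧ z' < T+1)}. -/
import Mathlib


open scoped Classical

noncomputable def lapW (ε : ℝ) : ℝ := ∑' z : ℤ, Real.exp (-ε * |(z : ℝ)|)

noncomputable def lapPMF (ε : ℝ) (m v : ℤ) : ℝ :=
  Real.exp (-ε * |(v : ℝ) - (m : ℝ)|) / lapW ε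

def ACoupling {A B : Type*} (μ₁ : A → ℝ) (μ₂ : B → ℝ) (ε δ : ℝ) (Φ : A → B → Prop) : Prop :=
  ∀ (f : A → ℝ) (g : B → ℝ),
    (∀ a, 0 ≤ f a ∧ f a ≤ 1) → (∀ b, 0 ≤ g b ∧ g b ≤ 1) →
    (∀ a b, Φ a b → f a ≤ g b) →
    ∑' a, μ₁ a * f a ≤ Real.exp ε * ∑' b, μ₂ b * g b + δ

lemma summable_exp_abs (ε : ℝ) (hε : 0 < ε) (m : ℤ) :
    Summable (fun v : ℤ => Real.exp (-ε * |(v : ℝ) - (m : ℝ)|)) := by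
  have h0 : Summable (fun v : ℤ => Real.exp (-ε * |(v : ℝ)|)) := by
    apply Summable.of_nat_of_neg
    · have hg : Summable (fun n : ℕ => Real.exp (-ε) ^ n) :=
        summable_geometric_of_lt_one (Real.exp_nonneg _)
          (Real.exp_lt_one_iff.mpr (by linarith))
      refine hg.congr fun n => ?_
      rw [← Real.exp_nat_mul]
      push_cast
      rw [abs_of_nonneg (by positivity)]
      ring_nf
    · have hg : Summable (fun n : ℕ => Real.exp (-ε) ^ n) :=
        summable_geometric_of_lt_one (Real.exp_nonneg _)
          (Real.exp_lt_one_iff.mpr (by linarith))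
      refine hg.congr fun n => ?_
      rw [← Real.exp_nat_mul]
      push_cast
      rw [abs_neg, abs_of_nonneg (by positivity)]
      ring_nf
  have := (Equiv.subRight m).summable_iff.mpr h0
  refine this.congr fun v => ?_
  simp [Equiv.subRight]

lemma lapW_pos (ε : ℝ) (hε : 0 < ε) : 0 < lapW ε := by
  have h := summable_exp_abs ε hε 0
  simp only [Int.cast_zero, sub_zero] at h
  exact Summable.tsum_pos h (fun z => (Real.exp_pos _).le) 0 (Real.exp_pos _)

lemma lapSummable (ε : ℝ) (hε : 0 < ε) (m : ℤ) : Summable (lapPMF ε m) :=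
  (summable_exp_abs ε hε m).div_const _

lemma lapPMF_nonneg (ε : ℝ) (hε : 0 < ε) (m v : ℤ) : 0 ≤ lapPMF ε m v :=
  div_nonneg (Real.exp_pos _).le (lapW_pos ε hε).le

set_option maxHeartbeats 1000000 in
theorem laplace_choice_coupling (ε : ℝ) (hε : 0 < ε) (m m' : ℤ)
    (hadj : |m - m'| ≤ 1) (T : ℤ) :
    ACoupling (lapPMF ε m) (lapPMF ε m') (2 * ε) 0
      (fun z z' => (T ≤ z ∧ T + 1 ≤ z') ∨ (z < T ∧ z' < T + 1)) := by
  intro f g hf hg hfg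
  rw [add_zero]
  -- key pointwise bound
  have key : ∀ w : ℤ, lapPMF ε m (w - 1) ≤ Real.exp (2 * ε) * lapPMF ε m' w := by
    intro w
    unfold lapPMF
    rw [← mul_div_assoc]
    apply div_le_div₀ (by positivity) _ (lapW_pos ε hε) le_rfl
    rw [← Real.exp_add]
    apply Real.exp_le_exp.mpr
    have habs : |(w : ℝ) - m'| - |((w - 1 : ℤ) : ℝ) - m| ≤ 2 := by
      have h1 : |(w : ℝ) - m'| - |((w - 1 : ℤ) : ℝ) - m| ≤
          |((w : ℝ) - m') - (((w - 1 : ℤ) : ℝ) - m)| := abs_sub_abs_le_abs_sub _ _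
      have h2 : ((w : ℝ) - m') - (((w - 1 : ℤ) : ℝ) - m) = (m : ℝ) - m' + 1 := by
        push_cast; ring
      have h3 : |(m : ℝ) - m' + 1| ≤ |(m : ℝ) - m'| + 1 := by
        calc |(m : ℝ) - m' + 1| ≤ |(m : ℝ) - m'| + |(1 : ℝ)| := abs_add_le _ _
        _ = |(m : ℝ) - m'| + 1 := by norm_num
      have h4 : |(m : ℝ) - m'| ≤ 1 := by
        have := hadj
        rw [← Int.cast_sub]
        exact_mod_cast (by exact_mod_cast hadj : |((m - m' : ℤ) : ℝ)| ≤ 1)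
      linarith [h1, h2 ▸ h1]
    have hm := mul_le_mul_of_nonneg_left habs hε.le
    nlinarith [hm]
  -- summability facts
  have hμ₁ := lapSummable ε hε m
  have hμ₂ := lapSummable ε hε m'
  have hs1 : Summable (fun z : ℤ => lapPMF ε m z * f z) := by
    apply hμ₁.of_nonneg_of_le
      (fun z => mul_nonneg (lapPMF_nonneg ε hε m z) (hf z).1)
      (fun z => by
        calc lapPMF ε m z * f z ≤ lapPMF ε m z * 1 :=
          mul_le_mul_of_nonneg_left (hf z).2 (lapPMF_nonneg ε hε m z)
        _ = lapPMF ε m z := mul_one _)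
  have hs2 : Summable (fun z : ℤ => lapPMF ε m z * g (z + 1)) := by
    apply hμ₁.of_nonneg_of_le
      (fun z => mul_nonneg (lapPMF_nonneg ε hε m z) (hg _).1)
      (fun z => by
        calc lapPMF ε m z * g (z + 1) ≤ lapPMF ε m z * 1 :=
          mul_le_mul_of_nonneg_left (hg _).2 (lapPMF_nonneg ε hε m z)
        _ = lapPMF ε m z := mul_one _)
  have hs3 : Summable (fun w : ℤ => lapPMF ε m' w * g w) := by
    apply hμ₂.of_nonneg_of_le
      (fun z => mul_nonneg (lapPMF_nonneg ε hε m' z) (hg z).1)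
      (fun z => by
        calc lapPMF ε m' z * g z ≤ lapPMF ε m' z * 1 :=
          mul_le_mul_of_nonneg_left (hg z).2 (lapPMF_nonneg ε hε m' z)
        _ = lapPMF ε m' z := mul_one _)
  have step1 : ∑' z : ℤ, lapPMF ε m z * f z ≤ ∑' z : ℤ, lapPMF ε m z * g (z + 1) := by
    apply Summable.tsum_le_tsum _ hs1 hs2
    intro z
    apply mul_le_mul_of_nonneg_left _ (lapPMF_nonneg ε hε m z)
    apply hfg z (z + 1)
    rcases le_or_gt T z with h | h
    · exact Or.inl ⟨h, by omega⟩
    · exact Or.inr ⟨h, by omega⟩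
  have step2 : ∑' z : ℤ, lapPMF ε m z * g (z + 1) = ∑' w : ℤ, lapPMF ε m (w - 1) * g w := by
    rw [← (Equiv.subRight (1 : ℤ)).tsum_eq (fun z => lapPMF ε m z * g (z + 1))]
    refine tsum_congr fun w => ?_
    simp [Equiv.subRight]
  have step3 : ∑' w : ℤ, lapPMF ε m (w - 1) * g w ≤
      Real.exp (2 * ε) * ∑' w : ℤ, lapPMF ε m' w * g w := by
    rw [← tsum_mul_left]
    apply Summable.tsum_le_tsum _ _ (hs3.mul_left _)
    · intro w
      rw [← mul_assoc]
      exact mul_le_mul_of_nonneg_right (key w) (hg w).1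
    · have : Summable (fun w : ℤ => lapPMF ε m (w - 1)) :=
        (Equiv.subRight (1 : ℤ)).summable_iff.mpr hμ₁
      apply this.of_nonneg_of_le
        (fun w => mul_nonneg (lapPMF_nonneg ε hε m _) (hg w).1)
        (fun w => by
          calc lapPMF ε m (w - 1) * g w ≤ lapPMF ε m (w - 1) * 1 :=
            mul_le_mul_of_nonneg_left (hg w).2 (lapPMF_nonneg ε hε m _)
          _ = lapPMF ε m (w - 1) := mul_one _)
  calc ∑' z : ℤ, lapPMF ε m z * f z ≤ ∑' z : ℤ, lapPMF ε m z * g (z + 1) := step1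
    _ = ∑' w : ℤ, lapPMF ε m (w - 1) * g w := step2
    _ ≤ Real.exp (2 * ε) * ∑' w : ℤ, lapPMF ε m' w * g w := step3
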